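/- Let M be a 3-connected matroid and let Q ⊆ E(M) be a quad (a 4-element set that is both a circuit and a cocircuit). If e ∈ Q is not contained in any triad of M, then M\e is 3-connected. -/

import Mathlib

open Matroid Set

namespace DetPairs

variable {α : Type*}

/-- The rank of a set in a matroid: the maximum size of an independent subset
(as an integer, for convenient arithmetic). -/
noncomputable def r (M : Matroid α) (X : Set α) : ℤ :=
  ((sSup (Set.ncard '' {I | M.Indep I ∧ I ⊆ X}) : ℕ) : ℤ)

/-- The connectivity function `λ_M(X) = r(X) + r(E − X) − r(M)`. -/
noncomputable def lam (M : Matroid α) (X : Set α) : ℤ :=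
  r M X + r M (M.E \ X) - r M M.E

/-- Local connectivity `⊓(X,Y) = r(X) + r(Y) − r(X ∪ Y)`. -/
noncomputable def localConn (M : Matroid α) (X Y : Set α) : ℤ :=
  r M X + r M Y - r M (X ∪ Y)

/-- A circuit: a minimal dependent set. -/
def Circuit (M : Matroid α) (C : Set α) : Prop :=
  C ⊆ M.E ∧ ¬ M.Indep C ∧ ∀ D, D ⊂ C → M.Indep D

/-- A cocircuit: a circuit of the dual. -/
def Cocircuit (M : Matroid α) (C : Set α) : Prop := Circuit M✶ C

/-- A triangle: a 3-element circuit. -/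
def Triangle (M : Matroid α) (T : Set α) : Prop := Circuit M T ∧ T.ncard = 3

/-- A triad: a 3-element cocircuit. -/
def Triad (M : Matroid α) (T : Set α) : Prop := Cocircuit M T ∧ T.ncard = 3

/-- A quad: a 4-element set that is both a circuit and a cocircuit. -/
def Quad (M : Matroid α) (Q : Set α) : Prop :=
  Circuit M Q ∧ Cocircuit M Q ∧ Q.ncard = 4

/-- Deletion of a set of elements. -/
def Del (M : Matroid α) (D : Set α) : Matroid α := M ↾ (M.E \ D)

/-- Contraction of a set of elements. -/
def Con (M : Matroid α) (C : Set α) : Matroid α := (M✶ ↾ (M.E \ C))✶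

/-- `M` is 3-connected: it has no `k`-separation for `k = 1, 2`, where a
`k`-separation is a set `X` with `λ(X) = k − 1`, `|X| ≥ k` and `|E − X| ≥ k`. -/
def ThreeConnected (M : Matroid α) : Prop :=
  ∀ k : ℕ, 0 < k → k < 3 → ∀ X ⊆ M.E,
    ¬ (lam M X = (k : ℤ) - 1 ∧ (k : ℤ) ≤ X.ncard ∧ (k : ℤ) ≤ (M.E \ X).ncard)

/-- A detachable pair: distinct elements `e, f` such that `M \ e \ f` or
`M / e / f` is 3-connected. -/
def DetachablePair (M : Matroid α) (e f : α) : Prop :=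
  e ≠ f ∧ e ∈ M.E ∧ f ∈ M.E ∧
    (ThreeConnected (Del M {e, f}) ∨ ThreeConnected (Con M {e, f}))

/-- The triple of elements with indices `i, i+1, i+2` in an ordering. -/
def tri (e : ℕ → α) (i : ℕ) : Set α := {e i, e (i + 1), e (i + 2)}

/-- `(e 0, …, e (n-1))` is a fan ordering of length `n ≥ 3` in `M`:
consecutive triples alternate between triangles and triads. -/
def FanOrd (M : Matroid α) (n : ℕ) (e : ℕ → α) : Prop :=
  3 ≤ n ∧ Set.InjOn e (Set.Iio n) ∧ (∀ i < n, e i ∈ M.E) ∧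
    (Triangle M (tri e 0) ∨ Triad M (tri e 0)) ∧
    ∀ i, i + 3 < n →
      (Triangle M (tri e i) → Triad M (tri e (i + 1))) ∧
      (Triad M (tri e i) → Triangle M (tri e (i + 1)))

/-- A fan (as a set): either a 2-element subset of the ground set, or the
underlying set of a fan ordering of length at least 3. -/
def IsFan (M : Matroid α) (F : Set α) : Prop :=
  (F ⊆ M.E ∧ F.ncard = 2) ∨ ∃ n e, FanOrd M n e ∧ F = e '' Set.Iio n

/-- A maximal fan: a fan contained in no strictly larger fan. -/
def MaximalFan (M : Matroid α) (F : Set α) : Prop :=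
  IsFan M F ∧ ∀ F', IsFan M F' → F ⊆ F' → F' = F

/-- `M` is a wheel or a whirl: its ground set has a cyclic ordering of even size
`2n` in which consecutive triples alternate between triangles and triads. -/
def IsWheelOrWhirl (M : Matroid α) : Prop :=
  ∃ (n : ℕ) (e : ℕ → α), 2 ≤ n ∧ Set.InjOn e (Set.Iio (2 * n)) ∧
    M.E = e '' Set.Iio (2 * n) ∧
    ∀ i < 2 * n,
      (i % 2 = 0 → Triangle M {e i, e ((i + 1) % (2 * n)), e ((i + 2) % (2 * n))}) ∧
      (i % 2 = 1 → Triad M {e i, e ((i + 1) % (2 * n)), e ((i + 2) % (2 * n))})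

/-- An `M(K₄)`-separator: a 6-element set `{a,b,c,x,y,z}` where `{x,y,z}` is a
triad and `{a,b,c}`, `{a,x,y}`, `{b,x,z}`, `{c,y,z}` are triangles. -/
def MK4Sep (M : Matroid α) (S : Set α) : Prop :=
  ∃ a b c x y z : α, S = {a, b, c, x, y, z} ∧ S.ncard = 6 ∧
    Triad M {x, y, z} ∧ Triangle M {a, b, c} ∧ Triangle M {a, x, y} ∧
    Triangle M {b, x, z} ∧ Triangle M {c, y, z}

/-- A vertical 3-separation `(X, {e}, Y)` of `M`. -/
def VertThreeSep (M : Matroid α) (X : Set α) (e : α) (Y : Set α) : Prop :=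
  X ∪ {e} ∪ Y = M.E ∧ Disjoint X Y ∧ e ∉ X ∧ e ∉ Y ∧
    lam M X = 2 ∧ lam M Y = 2 ∧ e ∈ M.closure X ∧ e ∈ M.closure Y ∧
    3 ≤ r M X ∧ 3 ≤ r M Y

/-- `N` is a simplification of `M`: a restriction of `M` to a set of
representatives, one from each parallel class of nonloops. -/
def SimplificationOf (M N : Matroid α) : Prop :=
  ∃ X : Set α, (∀ x ∈ X, x ∈ M.E ∧ x ∉ M.closure ∅) ∧ N = M ↾ X ∧
    ∀ y ∈ M.E, y ∉ M.closure ∅ →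
      ∃! x, x ∈ X ∧ M.closure {y} = M.closure {x}

/-!
Let `(X, Y)` be a 1- or 2-separation of `M \ e`. Adding `e` to one side gives a separation of `M`
whose connectivity is larger by at most one, and not larger at all if that side spans `e`; so
3-connectivity of `M` rules out 1-separations of `M \ e`, and 2-separations in which a side spans
`e`. In the remaining case the set `Q - e`, which spans `e` since `Q` is a circuit, meets both
sides, so one side `Z` meets it in a single element `y`. If `|Z| ≥ 3`, then `y` is a coloop of
`M | Z` because `Q` is a cocircuit, so moving `y` to the other side keeps connectivity at most one
while making that side span `e`. If `|Z| = 2`, either `r Z ≤ 1` and `Z` is a 2-separation of `M`,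
or `Z ∪ e` has nonspanning complement; as a 3-connected matroid with at least four elements has
no cocircuits of size at most two, `Z ∪ e` is then a triad containing `e`.
-/

lemma sdiff_insert_eq_sdiff_sdiff (E X : Set α) (e : α) : E \ insert e X = (E \ {e}) \ X := by
  rw [insert_eq, sdiff_sdiff]

lemma exists_inter_eq_singleton_of_ncard_eq_three {A X Y : Set α} (hA : A.ncard = 3)
    (hAXY : A ⊆ X ∪ Y) (hXY : Disjoint X Y) (hAX : ¬ A ⊆ X) (hAY : ¬ A ⊆ Y) :
    (∃ y, A ∩ X = {y}) ∨ ∃ y, A ∩ Y = {y} := by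
  have hAfin : A.Finite := finite_of_ncard_ne_zero (by omega)
  have hsplit : (A ∩ X).ncard + (A ∩ Y).ncard = 3 := by
    rw [← hA, ← ncard_union_eq (hXY.mono inter_subset_right inter_subset_right)
      (hAfin.subset inter_subset_left) (hAfin.subset inter_subset_left),
      ← inter_union_distrib_left, inter_eq_left.2 hAXY]
  have hY1 : 1 ≤ (A ∩ Y).ncard := by
    obtain ⟨a, haA, haX⟩ := not_subset.1 hAX
    exact (ncard_pos (hAfin.subset inter_subset_left)).2 ⟨a, haA, (hAXY haA).resolve_left haX⟩
  have hX1 : 1 ≤ (A ∩ X).ncard := by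
    obtain ⟨a, haA, haY⟩ := not_subset.1 hAY
    exact (ncard_pos (hAfin.subset inter_subset_left)).2 ⟨a, haA, (hAXY haA).resolve_right haY⟩
  rw [← ncard_eq_one, ← ncard_eq_one]
  omega

lemma r_nonneg (M : Matroid α) (X : Set α) : 0 ≤ r M X := Int.natCast_nonneg _

lemma r_restrict (M : Matroid α) {R X : Set α} (hXR : X ⊆ R) : r (M ↾ R) X = r M X := by
  have hsets : {I | (M ↾ R).Indep I ∧ I ⊆ X} = {I | M.Indep I ∧ I ⊆ X} :=
    Set.ext fun _ ↦ ⟨fun h ↦ ⟨h.1.1, h.2⟩, fun h ↦ ⟨⟨h.1, h.2.trans hXR⟩, h.2⟩⟩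
  rw [r, r, hsets]

section Rank

variable {M : Matroid α} [M.RankFinite] {I X Y : Set α} {x : α}

lemma r_eq_ncard_of_isBasis' (hI : M.IsBasis' I X) : r M X = I.ncard := by
  have hmax : IsGreatest (ncard '' {J | M.Indep J ∧ J ⊆ X}) I.ncard := by
    refine ⟨⟨I, ⟨hI.indep, hI.subset⟩, rfl⟩, ?_⟩
    rintro _ ⟨J, ⟨hJ, hJX⟩, rfl⟩
    have hJI : J.encard ≤ I.encard := hI.encard_eq_eRk ▸ hJ.encard_le_eRk_of_subset hJX
    rw [← hJ.finite.cast_ncard_eq, ← hI.indep.finite.cast_ncard_eq] at hJI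
    exact_mod_cast hJI
  rw [r, hmax.csSup_eq]

variable (M)

lemma eRk_eq_r (X : Set α) : M.eRk X = (r M X).toNat := by
  obtain ⟨I, hI⟩ := M.exists_isBasis' X
  rw [r_eq_ncard_of_isBasis' hI, ← hI.encard_eq_eRk, Int.toNat_natCast,
    hI.indep.finite.cast_ncard_eq]

lemma r_mono (h : X ⊆ Y) : r M X ≤ r M Y := by
  have h := M.eRk_mono h
  rw [eRk_eq_r, eRk_eq_r] at h
  norm_cast at h
  have := r_nonneg M X
  have := r_nonneg M Y
  omega

lemma r_le_ncard (hX : X.Finite) : r M X ≤ X.ncard := by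
  have h := M.eRk_le_encard X
  rw [eRk_eq_r, ← hX.cast_ncard_eq] at h
  norm_cast at h
  have := r_nonneg M X
  omega

lemma r_insert_le (x : α) (X : Set α) : r M (insert x X) ≤ r M X + 1 := by
  have h := M.eRk_insert_le_add_one x X
  rw [eRk_eq_r, eRk_eq_r] at h
  norm_cast at h
  have := r_nonneg M X
  have := r_nonneg M (insert x X)
  omega

lemma r_union_le (X Y : Set α) : r M (X ∪ Y) ≤ r M X + r M Y := by
  have h := M.eRk_union_le_eRk_add_eRk X Y
  rw [eRk_eq_r, eRk_eq_r, eRk_eq_r] at h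
  norm_cast at h
  have := r_nonneg M X
  have := r_nonneg M Y
  have := r_nonneg M (X ∪ Y)
  omega

variable {M}

lemma r_insert_of_mem_closure (hx : x ∈ M.closure X) : r M (insert x X) = r M X := by
  have h := M.eRk_insert_closure_eq x X
  rw [insert_eq_of_mem hx, eRk_closure_eq, eRk_eq_r, eRk_eq_r] at h
  norm_cast at h
  have := r_nonneg M X
  have := r_nonneg M (insert x X)
  omega

lemma r_insert_of_notMem_closure (hx : x ∈ M.E \ M.closure X) :
    r M (insert x X) = r M X + 1 := by
  have h := eRk_insert_eq_add_one hx
  rw [eRk_eq_r, eRk_eq_r] at h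
  norm_cast at h
  have := r_nonneg M X
  have := r_nonneg M (insert x X)
  omega

lemma spanning_iff_r_ground_le (hX : X ⊆ M.E) : M.Spanning X ↔ r M M.E ≤ r M X := by
  rw [spanning_iff_eRk_le hX, ← eRk_ground, eRk_eq_r, eRk_eq_r, Nat.cast_le]
  have := r_nonneg M X
  have := r_nonneg M M.E
  omega

end Rank

section Cocircuit

variable {M : Matroid α} {C K T : Set α} {y : α}

lemma circuit_iff_isCircuit : Circuit M C ↔ M.IsCircuit C := by
  rw [isCircuit_iff_forall_ssubset, Dep]
  exact ⟨fun ⟨hCE, hC, hmin⟩ ↦ ⟨⟨hC, hCE⟩, hmin⟩, fun ⟨⟨hC, hCE⟩, hmin⟩ ↦ ⟨hCE, hC, hmin⟩⟩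

lemma cocircuit_iff_isCocircuit : Cocircuit M K ↔ M.IsCocircuit K := circuit_iff_isCircuit

lemma notMem_closure_compl_of_isCocircuit (hK : M.IsCocircuit K) (hy : y ∈ K) :
    y ∉ M.closure (M.E \ K) := by
  intro hcl
  have hmin := isCocircuit_iff_minimal_compl_nonspanning.1 hK
  have hspan : M.Spanning (M.E \ (K \ {y})) :=
    not_not.1 (hmin.not_prop_of_ssubset (sdiff_singleton_ssubset.2 hy))
  have hins : M.Spanning (insert y (M.E \ K)) :=
    hspan.superset (fun x hx ↦ by grind) (insert_subset (hK.subset_ground hy) sdiff_subset)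
  rw [spanning_iff_closure_eq, closure_insert_eq_of_mem_closure hcl,
    ← spanning_iff_closure_eq] at hins
  exact hmin.prop hins

variable [M.RankFinite]

lemma r_compl_lt_of_isCocircuit (hK : M.IsCocircuit K) : r M (M.E \ K) < r M M.E := by
  have hK' := (isCocircuit_iff_minimal_compl_nonspanning.1 hK).prop
  rw [spanning_iff_r_ground_le sdiff_subset] at hK'
  exact lt_of_not_ge hK'

lemma exists_isCocircuit_subset_of_r_compl_lt (hT : T ⊆ M.E) (hr : r M (M.E \ T) < r M M.E) :
    ∃ K ⊆ T, M.IsCocircuit K := by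
  have hT' : ¬ M.Coindep T := by
    rw [coindep_iff_compl_spanning hT, spanning_iff_r_ground_le sdiff_subset]
    exact not_le.2 hr
  exact ((not_indep_iff (M := M✶) hT).1 hT').exists_isCircuit_subset

end Cocircuit

section Connectivity

variable (M : Matroid α) {X : Set α} {e y : α}

lemma lam_compl (hX : X ⊆ M.E) : lam M (M.E \ X) = lam M X := by
  rw [lam, lam, sdiff_sdiff_cancel_left hX, add_comm (r M _)]

lemma lam_del (hX : X ⊆ M.E \ {e}) :
    lam (Del M {e}) X = r M X + r M ((M.E \ {e}) \ X) - r M (M.E \ {e}) := by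
  rw [lam, Del, restrict_ground_eq, r_restrict M hX, r_restrict M sdiff_subset,
    r_restrict M subset_rfl]

variable {M}

lemma lam_del_compl (hX : X ⊆ M.E \ {e}) :
    lam (Del M {e}) ((M.E \ {e}) \ X) = lam (Del M {e}) X :=
  lam_compl (Del M {e}) hX

variable (M) [M.RankFinite]

lemma lam_nonneg (X : Set α) : 0 ≤ lam M X := by
  have hE : r M M.E ≤ r M (X ∪ M.E \ X) := r_mono M (by grind)
  rw [lam]
  linarith [r_union_le M X (M.E \ X)]

lemma lam_le_r (X : Set α) : lam M X ≤ r M X := by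
  rw [lam]
  linarith [r_mono M (sdiff_subset : M.E \ X ⊆ M.E)]

variable {M}

lemma lam_insert_le_lam_del_add_one (hX : X ⊆ M.E \ {e}) :
    lam M (insert e X) ≤ lam (Del M {e}) X + 1 := by
  rw [lam_del M hX, lam, sdiff_insert_eq_sdiff_sdiff]
  linarith [r_insert_le M e X, r_mono M (sdiff_subset : M.E \ {e} ⊆ M.E)]

lemma lam_insert_le_lam_del_of_mem_closure (hX : X ⊆ M.E \ {e}) (he : e ∈ M.closure X) :
    lam M (insert e X) ≤ lam (Del M {e}) X := by
  rw [lam_del M hX, lam, sdiff_insert_eq_sdiff_sdiff, r_insert_of_mem_closure he]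
  linarith [r_mono M (sdiff_subset : M.E \ {e} ⊆ M.E)]

lemma lam_del_insert_le (hX : X ⊆ M.E \ {e}) (hy : y ∈ (M.E \ {e}) \ X)
    (hycl : y ∉ M.closure ((M.E \ {e}) \ insert y X)) :
    lam (Del M {e}) (insert y X) ≤ lam (Del M {e}) X := by
  have hcompl : insert y ((M.E \ {e}) \ insert y X) = (M.E \ {e}) \ X := by
    rw [insert_sdiff_insert, insert_eq_of_mem hy]
  have hr : r M ((M.E \ {e}) \ X) = r M ((M.E \ {e}) \ insert y X) + 1 := by
    rw [← hcompl, r_insert_of_notMem_closure ⟨hy.1.1, hycl⟩]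
  rw [lam_del M hX, lam_del M (insert_subset hy.1 hX)]
  linarith [r_insert_le M y X]

end Connectivity

namespace ThreeConnected

variable {M : Matroid α} {K Q S T X : Set α} {e y : α}

lemma two_le_lam [M.RankFinite] (hM : ThreeConnected M) (hS : S ⊆ M.E)
    (hS2 : 2 ≤ S.ncard) (hSc : 2 ≤ (M.E \ S).ncard) : 2 ≤ lam M S := by
  have h0 := lam_nonneg M S
  by_contra! hlt
  obtain h | h : lam M S = 0 ∨ lam M S = 1 := by omega
  · exact hM 1 one_pos (by norm_num) S hS ⟨by omega, by omega, by omega⟩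
  · exact hM 2 two_pos (by norm_num) S hS ⟨by omega, by omega, by omega⟩

lemma two_le_lam_insert [M.RankFinite] (hM : ThreeConnected M) (he : e ∈ M.E)
    (hX : X ⊆ M.E \ {e}) (hX1 : 1 ≤ X.ncard) (hXc : 2 ≤ ((M.E \ {e}) \ X).ncard) :
    2 ≤ lam M (insert e X) := by
  have heX : e ∉ X := fun h ↦ (hX h).2 rfl
  refine hM.two_le_lam (insert_subset he (hX.trans sdiff_subset)) ?_ ?_
  · rw [ncard_insert_of_notMem heX (finite_of_ncard_pos hX1)]
    omega
  · rwa [sdiff_insert_eq_sdiff_sdiff]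

lemma one_le_lam_del [M.RankFinite] (hM : ThreeConnected M) (he : e ∈ M.E)
    (hX : X ⊆ M.E \ {e}) (hX1 : 1 ≤ X.ncard) (hXc : 2 ≤ ((M.E \ {e}) \ X).ncard) :
    1 ≤ lam (Del M {e}) X := by
  linarith [hM.two_le_lam_insert he hX hX1 hXc, lam_insert_le_lam_del_add_one (M := M) hX]

lemma two_le_lam_del_of_mem_closure [M.RankFinite] (hM : ThreeConnected M)
    (hX : X ⊆ M.E \ {e}) (hX1 : 1 ≤ X.ncard) (hXc : 2 ≤ ((M.E \ {e}) \ X).ncard)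
    (hcl : e ∈ M.closure X) : 2 ≤ lam (Del M {e}) X := by
  linarith [hM.two_le_lam_insert (mem_ground_of_mem_closure hcl) hX hX1 hXc,
    lam_insert_le_lam_del_of_mem_closure hX hcl]

lemma three_le_ncard_of_isCocircuit [M.Finite] (hM : ThreeConnected M) (hE : 4 ≤ M.E.ncard)
    (hK : M.IsCocircuit K) : 3 ≤ K.ncard := by
  by_contra! hK2
  obtain ⟨S, hKS, hSE, hS2⟩ :=
    exists_subsuperset_card_eq hK.subset_ground (Nat.le_of_lt_succ hK2) (by omega : 2 ≤ M.E.ncard)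
  have hSfin : S.Finite := M.ground_finite.subset hSE
  have hSc : 2 ≤ (M.E \ S).ncard := by
    rw [ncard_sdiff hSE hSfin]
    omega
  have hrS : r M S ≤ 2 := by simpa [hS2] using r_le_ncard M hSfin
  have hrSc : r M (M.E \ S) ≤ r M (M.E \ K) := r_mono M (sdiff_subset_sdiff_right hKS)
  have := hM.two_le_lam hSE hS2.ge hSc
  rw [lam] at this
  linarith [r_compl_lt_of_isCocircuit hK]

lemma triad_of_r_compl_lt [M.Finite] (hM : ThreeConnected M) (hE : 4 ≤ M.E.ncard)
    (hT : T ⊆ M.E) (hT3 : T.ncard = 3) (hr : r M (M.E \ T) < r M M.E) : Triad M T := by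
  obtain ⟨K, hKT, hK⟩ := exists_isCocircuit_subset_of_r_compl_lt hT hr
  have hKT' : K = T := eq_of_subset_of_ncard_le hKT
    (hT3 ▸ hM.three_le_ncard_of_isCocircuit hE hK) (M.ground_finite.subset hT)
  exact ⟨cocircuit_iff_isCocircuit.2 (hKT' ▸ hK), hT3⟩

lemma lam_del_pos [M.Finite] (hM : ThreeConnected M) (hE : 4 ≤ M.E.ncard) (he : e ∈ M.E)
    (hX : X ⊆ M.E \ {e}) (hX1 : 1 ≤ X.ncard) (hXc : 1 ≤ ((M.E \ {e}) \ X).ncard) :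
    0 < lam (Del M {e}) X := by
  have hEe : (M.E \ {e}).ncard + 1 = M.E.ncard := ncard_sdiff_singleton_add_one he M.ground_finite
  have hXc' : ((M.E \ {e}) \ X).ncard = (M.E \ {e}).ncard - X.ncard :=
    ncard_sdiff hX (M.ground_finite.subset (hX.trans sdiff_subset))
  have hXle : X.ncard ≤ (M.E \ {e}).ncard := ncard_le_ncard hX (M.ground_finite.sdiff)
  rcases le_or_gt 2 ((M.E \ {e}) \ X).ncard with hXc2 | hXc1
  · linarith [hM.one_le_lam_del he hX hX1 hXc2]
  · rw [← lam_del_compl hX]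
    refine hM.one_le_lam_del he sdiff_subset hXc ?_
    rw [sdiff_sdiff_cancel_left hX]
    omega

lemma lam_del_ne_one_of_ncard_eq_two [M.Finite] (hM : ThreeConnected M) (hE : 4 ≤ M.E.ncard)
    (ht : ∀ T, Triad M T → e ∉ T) (he : e ∈ M.E) (hX : X ⊆ M.E \ {e}) (hX2 : X.ncard = 2) :
    lam (Del M {e}) X ≠ 1 := by
  intro h1
  rw [lam_del M hX] at h1
  have hXE : X ⊆ M.E := hX.trans sdiff_subset
  have hXfin : X.Finite := M.ground_finite.subset hXE
  have hrX : r M X ≤ 2 := by simpa [hX2] using r_le_ncard M hXfin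
  obtain hr1 | hr2 : r M X ≤ 1 ∨ r M X = 2 := by omega
  · have hXc : 2 ≤ (M.E \ X).ncard := by
      rw [ncard_sdiff hXE hXfin]
      omega
    linarith [hM.two_le_lam hXE hX2.ge hXc, lam_le_r M X]
  · have heX : e ∉ X := fun h ↦ (hX h).2 rfl
    have hT3 : (insert e X).ncard = 3 := by rw [ncard_insert_of_notMem heX hXfin, hX2]
    have hr : r M (M.E \ insert e X) < r M M.E := by
      rw [sdiff_insert_eq_sdiff_sdiff]
      linarith [r_mono M (sdiff_subset : M.E \ {e} ⊆ M.E)]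
    exact ht _ (hM.triad_of_r_compl_lt hE (insert_subset he hXE) hT3 hr) (mem_insert e X)

lemma lam_del_ne_one_of_isCocircuit [M.Finite] (hM : ThreeConnected M)
    (hK : M.IsCocircuit K) (hX : X ⊆ M.E \ {e}) (hX3 : 3 ≤ X.ncard) (hyX : y ∈ X) (hyK : y ∈ K)
    (hXK : X ∩ K ⊆ {y}) (hcl : e ∈ M.closure (insert y ((M.E \ {e}) \ X))) :
    lam (Del M {e}) X ≠ 1 := by
  intro h1
  set W := (M.E \ {e}) \ X
  have hW : W ⊆ M.E \ {e} := sdiff_subset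
  have hWX : (M.E \ {e}) \ W = X := sdiff_sdiff_cancel_left hX
  have hyW : y ∈ (M.E \ {e}) \ W := hWX ▸ hyX
  have hcompl : (M.E \ {e}) \ insert y W = X \ {y} := by
    rw [← union_singleton, ← sdiff_sdiff, hWX]
  have hXK' : X \ {y} ⊆ M.E \ K := fun x hx ↦ ⟨(hX hx.1).1, fun hxK ↦ hx.2 (hXK ⟨hx.1, hxK⟩)⟩
  have hycl : y ∉ M.closure (X \ {y}) := fun h ↦
    notMem_closure_compl_of_isCocircuit hK hyK (M.closure_subset_closure hXK' h)
  have hle := lam_del_insert_le hW hyW (hcompl ▸ hycl)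
  have hXy : 2 ≤ (X \ {y}).ncard := by
    have := ncard_sdiff_singleton_add_one hyX (finite_of_ncard_pos (by omega : 0 < X.ncard))
    omega
  have hyW1 : 1 ≤ (insert y W).ncard :=
    (ncard_pos ((M.ground_finite.sdiff.subset hW).insert y)).2 (insert_nonempty y W)
  have h2 := hM.two_le_lam_del_of_mem_closure (insert_subset hyW.1 hW) hyW1 (hcompl ▸ hXy) hcl
  rw [lam_del_compl hX, h1] at hle
  linarith

lemma lam_del_ne_one_of_quad_inter_eq_singleton [M.Finite] (hM : ThreeConnected M)
    (hE : 4 ≤ M.E.ncard) (hQ : Quad M Q) (heQ : e ∈ Q) (ht : ∀ T, Triad M T → e ∉ T)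
    (hX : X ⊆ M.E \ {e}) (hX2 : 2 ≤ X.ncard) (hQX : (Q \ {e}) ∩ X = {y}) :
    lam (Del M {e}) X ≠ 1 := by
  have hQc : M.IsCircuit Q := circuit_iff_isCircuit.1 hQ.1
  have hy : y ∈ (Q \ {e}) ∩ X := hQX ▸ mem_singleton y
  rcases hX2.eq_or_lt with h2 | h3
  · exact hM.lam_del_ne_one_of_ncard_eq_two hE ht (hQc.subset_ground heQ) hX h2.symm
  refine hM.lam_del_ne_one_of_isCocircuit (cocircuit_iff_isCocircuit.1 hQ.2.1) hX h3 hy.2 hy.1.1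
    (fun x hx ↦ hQX ▸ ⟨⟨hx.2, (hX hx.1).2⟩, hx.1⟩) ?_
  refine M.closure_subset_closure (fun x hx ↦ ?_) (hQc.mem_closure_sdiff_singleton_of_mem heQ)
  by_cases hxX : x ∈ X
  · exact Or.inl (hQX ▸ ⟨hx, hxX⟩ : x ∈ ({y} : Set α))
  · exact Or.inr ⟨⟨hQc.subset_ground hx.1, hx.2⟩, hxX⟩

lemma lam_del_ne_one_of_quad [M.Finite] (hM : ThreeConnected M) (hE : 4 ≤ M.E.ncard)
    (hQ : Quad M Q) (heQ : e ∈ Q) (ht : ∀ T, Triad M T → e ∉ T) (hX : X ⊆ M.E \ {e})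
    (hX2 : 2 ≤ X.ncard) (hXc : 2 ≤ ((M.E \ {e}) \ X).ncard) : lam (Del M {e}) X ≠ 1 := by
  intro h1
  set Y := (M.E \ {e}) \ X
  have hYX : (M.E \ {e}) \ Y = X := sdiff_sdiff_cancel_left hX
  have hlamY : lam (Del M {e}) Y = 1 := (lam_del_compl hX).trans h1
  have hQc : M.IsCircuit Q := circuit_iff_isCircuit.1 hQ.1
  have heQ' : e ∈ M.closure (Q \ {e}) := hQc.mem_closure_sdiff_singleton_of_mem heQ
  have hclX : e ∉ M.closure X := fun hcl ↦ by
    linarith [hM.two_le_lam_del_of_mem_closure hX (by omega) hXc hcl]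
  have hclY : e ∉ M.closure Y := fun hcl ↦ by
    linarith [hM.two_le_lam_del_of_mem_closure (X := Y) sdiff_subset (by omega) (by rwa [hYX]) hcl]
  have hQ3 : (Q \ {e}).ncard = 3 := by
    have := ncard_sdiff_singleton_add_one heQ (M.ground_finite.subset hQc.subset_ground)
    rw [hQ.2.2] at this
    omega
  have hQXY : Q \ {e} ⊆ X ∪ Y := by
    rw [union_sdiff_cancel hX]
    exact sdiff_subset_sdiff_left hQc.subset_ground
  obtain ⟨y, hy⟩ | ⟨y, hy⟩ := exists_inter_eq_singleton_of_ncard_eq_three hQ3 hQXY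
    disjoint_sdiff_right (fun h ↦ hclX (M.closure_subset_closure h heQ'))
    (fun h ↦ hclY (M.closure_subset_closure h heQ'))
  · exact hM.lam_del_ne_one_of_quad_inter_eq_singleton hE hQ heQ ht hX hX2 hy h1
  · exact hM.lam_del_ne_one_of_quad_inter_eq_singleton hE hQ heQ ht sdiff_subset hXc hy hlamY

end ThreeConnected

/-- If `Q` is a quad of a 3-connected matroid `M` and `e ∈ Q` is in no triad,
then `M \ e` is 3-connected. -/
theorem stmt10 (M : Matroid α) [M.Finite] (hM : ThreeConnected M)
    {Q : Set α} (hQ : Quad M Q) {e : α} (he : e ∈ Q)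
    (ht : ∀ T, Triad M T → e ∉ T) :
    ThreeConnected (Del M {e}) := by
  have hQE : Q ⊆ M.E := hQ.1.1
  have hE : 4 ≤ M.E.ncard := hQ.2.2 ▸ ncard_le_ncard hQE M.ground_finite
  rintro k hk0 hk3 X hX ⟨hlam, hkX, hkXc⟩
  change (k : ℤ) ≤ ((M.E \ {e}) \ X).ncard at hkXc
  interval_cases k
  · have := hM.lam_del_pos hE (hQE he) hX (by omega) (by omega)
    omega
  · exact hM.lam_del_ne_one_of_quad hE hQ he ht hX (by omega) (by omega) (by omega)
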